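/- arXiv:0805.3339 — 4 statements merged into one kernel-verified Lean document; each statement's English description precedes it below -/
import Mathlib

section
/- For any list of elements of a linearly ordered type, sorting the list minimizes the number of adjacent unequal pairs: after sorting, the number of indices i with l[i] ≠ l[i+1] equals (number of distinct values in the list) − 1, and this is the minimum over all permutations of the list. -/
/-!
Walking along a list, a value not seen before can only appear right after a transition, so a
list with `k` distinct values has at least `k - 1` transitions. In a sorted list equal values are
contiguous, so every transition introduces a new value and the bound is attained.
-/

/-- Number of adjacent unequal pairs in a list. -/
def transitions {α : Type*} [DecidableEq α] (l : List α) : ℕ :=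
  ((l.zip l.tail).filter (fun p => p.1 ≠ p.2)).length

section

variable {α : Type*} [DecidableEq α]

lemma transitions_cons_cons (a b : α) (t : List α) :
    transitions (a :: b :: t) = (if a = b then 0 else 1) + transitions (b :: t) := by
  by_cases h : a = b <;> simp [transitions, h]; omega

lemma card_toFinset_sub_one_le_transitions : ∀ l : List α, l.toFinset.card - 1 ≤ transitions l
  | [] => by simp [transitions]
  | [a] => by simp [transitions]
  | a :: b :: t => by
    have ih := card_toFinset_sub_one_le_transitions (b :: t)
    have hcard : (a :: b :: t).toFinset.card ≤ (b :: t).toFinset.card + 1 := by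
      rw [List.toFinset_cons]
      exact Finset.card_insert_le _ _
    rw [transitions_cons_cons]
    by_cases hab : a = b
    · subst hab
      simpa using ih
    · simp only [hab, if_false]
      omega

lemma transitions_eq_card_toFinset_sub_one_of_pairwise [PartialOrder α] :
    ∀ {l : List α}, l.Pairwise (· ≤ ·) → transitions l = l.toFinset.card - 1
  | [], _ => by simp [transitions]
  | [a], _ => by simp [transitions]
  | a :: b :: t, hl => by
    obtain ⟨ha_le, hbt⟩ := List.pairwise_cons.mp hl
    have ih := transitions_eq_card_toFinset_sub_one_of_pairwise hbt
    have hpos : 0 < (b :: t).toFinset.card := Finset.card_pos.mpr ⟨b, by simp⟩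
    rw [transitions_cons_cons]
    by_cases hab : a = b
    · subst hab
      simpa using ih
    · -- everything after `a` is `≥ b`, so `a` could only reappear if `a = b`
      have ha_notMem : a ∉ (b :: t).toFinset := by
        intro ha
        have hb_le : ∀ x ∈ b :: t, b ≤ x := by
          simpa using List.pairwise_cons.mp hbt |>.1
        exact hab (le_antisymm (ha_le b (by simp)) (hb_le a (List.mem_toFinset.mp ha)))
      rw [List.toFinset_cons, Finset.card_insert_of_notMem ha_notMem]
      simp only [hab, if_false]
      omega

end

theorem sorting_minimizes_transitions {α : Type*} [LinearOrder α] (l : List α) :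
    transitions (l.insertionSort (· ≤ ·)) = l.dedup.length - 1 ∧
    ∀ m : List α, l.Perm m → transitions (l.insertionSort (· ≤ ·)) ≤ transitions m := by
  have hsorted : transitions (l.insertionSort (· ≤ ·)) = l.toFinset.card - 1 := by
    rw [transitions_eq_card_toFinset_sub_one_of_pairwise (l.pairwise_insertionSort (· ≤ ·)),
      List.toFinset_eq_of_perm _ _ (l.perm_insertionSort (· ≤ ·))]
  refine ⟨by rw [hsorted, List.card_toFinset], fun m hm => ?_⟩
  rw [hsorted, List.toFinset_eq_of_perm _ _ hm]
  exact card_toFinset_sub_one_le_transitions m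
end

section
/- The Gray-code comparison relation on binary vectors of a fixed length n, defined by: a <_G b if and only if there exists j such that a_i = b_i for all i < j, a_j ≠ b_j, and a_j equals the parity of the number of 1s among a_1,…,a_{j−1}, is a strict total order (irreflexive, transitive, and satisfying trichotomy). -/
/-!
Two distinct vectors first differ at a unique index `j`, and below `j` they have the same prefix
parity `p`. Exactly one of the two differing bits equals `p`, and its owner is the smaller vector;
this gives trichotomy and irreflexivity. For transitivity, `a <_G b` at `j₁` and `b <_G c` at `j₂`
cannot have `j₁ = j₂` (then both `a j₁` and `b j₁` would equal the common parity), so `a <_G c` is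
witnessed at `min j₁ j₂`.
-/

/-- Gray-code comparison on binary vectors of length `n`. -/
def grayLT (n : ℕ) (a b : Fin n → Bool) : Prop :=
  ∃ j : Fin n, (∀ i, i < j → a i = b i) ∧ a j ≠ b j ∧
    a j = decide ((Finset.univ.filter (fun i : Fin n => i < j ∧ a i = true)).card % 2 = 1)

open Finset

theorem exists_forall_lt_eq_and_ne {ι β : Type*} [LinearOrder ι] [WellFoundedLT ι]
    {a b : ι → β} (hab : a ≠ b) : ∃ j, (∀ i < j, a i = b i) ∧ a j ≠ b j := by
  obtain ⟨j, hj, hmin⟩ := wellFounded_lt.has_min {i | a i ≠ b i} (Function.ne_iff.mp hab)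
  exact ⟨j, fun i hi => not_not.mp fun hne => hmin i hne hi, hj⟩

theorem Bool.eq_or_eq_of_ne {x y : Bool} (p : Bool) (h : x ≠ y) : x = p ∨ y = p := by
  cases x <;> cases y <;> cases p <;> simp_all

namespace grayLT

variable {n : ℕ} {a b c : Fin n → Bool} {j : Fin n}

def prefixParity (a : Fin n → Bool) (j : Fin n) : Bool :=
  decide ((univ.filter fun i : Fin n => i < j ∧ a i = true).card % 2 = 1)

theorem prefixParity_congr (h : ∀ i < j, a i = b i) : prefixParity a j = prefixParity b j := by
  have hfilter : (univ.filter fun i : Fin n => i < j ∧ a i = true) =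
      univ.filter fun i : Fin n => i < j ∧ b i = true :=
    filter_congr fun i _ => and_congr_right fun hi => by rw [h i hi]
  rw [prefixParity, prefixParity, hfilter]

theorem irrefl (a : Fin n → Bool) : ¬grayLT n a a :=
  fun ⟨_, _, hne, _⟩ => hne rfl

theorem trans (hab : grayLT n a b) (hbc : grayLT n b c) : grayLT n a c := by
  obtain ⟨j₁, heq₁, hne₁, hpar₁⟩ := hab
  obtain ⟨j₂, heq₂, hne₂, hpar₂⟩ := hbc
  rcases lt_trichotomy j₁ j₂ with hlt | rfl | hgt
  · refine ⟨j₁, fun i hi => (heq₁ i hi).trans (heq₂ i (hi.trans hlt)), ?_, hpar₁⟩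
    rwa [← heq₂ j₁ hlt]
  · exact absurd (hpar₁.trans ((prefixParity_congr heq₁).trans hpar₂.symm)) hne₁
  · have heq₁' : ∀ i < j₂, a i = b i := fun i hi => heq₁ i (hi.trans hgt)
    refine ⟨j₂, fun i hi => (heq₁' i hi).trans (heq₂ i hi), ?_, ?_⟩
    · rwa [heq₁ j₂ hgt]
    · exact (heq₁ j₂ hgt).trans (hpar₂.trans (prefixParity_congr heq₁').symm)

theorem eq_of_not_lt_of_not_gt (hab : ¬grayLT n a b) (hba : ¬grayLT n b a) : a = b := by
  by_contra hab_ne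
  obtain ⟨j, heq, hne⟩ := exists_forall_lt_eq_and_ne hab_ne
  rcases Bool.eq_or_eq_of_ne (prefixParity a j) hne with ha | hb
  · exact hab ⟨j, heq, hne, ha⟩
  · exact hba ⟨j, fun i hi => (heq i hi).symm, Ne.symm hne, hb.trans (prefixParity_congr heq)⟩

end grayLT

theorem grayLT_strict_total_order (n : ℕ) :
    IsStrictTotalOrder (Fin n → Bool) (grayLT n) := by
  exact
    { trichotomous _ _ := grayLT.eq_of_not_lt_of_not_gt
      irrefl := grayLT.irrefl
      trans _ _ _ := grayLT.trans }
end

section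
/- For every N ≥ 1 and 0 ≤ k ≤ N there exists an enumeration of all C(N,k) k-element subsets of Fin N such that any two consecutive subsets differ by exchanging a single element (their symmetric difference has cardinality 2), i.e., a revolving-door Gray code for k-subsets exists. -/
/-!
Build the list of `k`-subsets of `{0, …, n - 1}` by the classical recursion
`R(n + 1, k + 1) = R(n, k + 1) ++ (reverse of R(n, k), with n adjoined to every set)`.
Adjoining `n` to two sets that avoid it does not change their symmetric difference, so consecutive
sets inside either half differ by one exchange. Every list `R(n, k)` starts with `{0, …, k - 1}`,
hence `R(n + 1, k + 1)` ends with `{0, …, k - 1, n}`; at the seam the two halves therefore meet in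
`{0, …, k - 1, n - 1}` and `{0, …, k - 2, n - 1, n}`, which again differ by one exchange.
-/

open Finset

def revolvingDoor : ℕ → ℕ → List (Finset ℕ)
  | _, 0 => [∅]
  | 0, _ + 1 => []
  | n + 1, k + 1 => revolvingDoor n (k + 1) ++ (revolvingDoor n k).reverse.map (insert n)

theorem length_revolvingDoor : ∀ n k, (revolvingDoor n k).length = n.choose k
  | _, 0 => by simp [revolvingDoor]
  | 0, _ + 1 => rfl
  | n + 1, k + 1 => by
    simp [revolvingDoor, length_revolvingDoor n, Nat.choose_succ_succ, Nat.add_comm]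

theorem revolvingDoor_eq_nil {n k : ℕ} (h : n < k) : revolvingDoor n k = [] :=
  List.length_eq_zero_iff.mp (by rw [length_revolvingDoor, Nat.choose_eq_zero_of_lt h])

theorem mem_revolvingDoor :
    ∀ {n k : ℕ} {s : Finset ℕ}, s ∈ revolvingDoor n k ↔ s ∈ powersetCard k (range n)
  | _, 0, _ => by simp [revolvingDoor]
  | 0, _ + 1, _ => by simp +contextual [revolvingDoor]
  | n + 1, k + 1, _ => by
    simp only [revolvingDoor, List.mem_append, List.mem_map, List.mem_reverse, mem_revolvingDoor,
      range_add_one, powersetCard_succ_insert notMem_range_self, mem_union, Finset.mem_image]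

theorem notMem_of_mem_revolvingDoor {n k : ℕ} {s : Finset ℕ} (hs : s ∈ revolvingDoor n k) :
    n ∉ s := fun hn =>
  notMem_range_self ((mem_powersetCard.mp (mem_revolvingDoor.mp hs)).1 hn)

theorem revolvingDoor_self : ∀ n, revolvingDoor n n = [range n]
  | 0 => rfl
  | n + 1 => by
    simp [revolvingDoor, revolvingDoor_eq_nil (Nat.lt_add_one n), revolvingDoor_self n,
      range_add_one]

theorem head?_revolvingDoor :
    ∀ {n k : ℕ}, k ≤ n → (revolvingDoor n k).head? = some (range k)
  | _, 0, _ => by simp [revolvingDoor]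
  | 0, _ + 1, h => absurd h (Nat.not_succ_le_zero _)
  | n + 1, k + 1, h => by
    rcases Nat.lt_or_ge k n with hlt | hge
    · rw [revolvingDoor, List.head?_append, head?_revolvingDoor hlt]
      rfl
    · rw [show k = n by omega, revolvingDoor_self]
      rfl

theorem getLast?_revolvingDoor_succ {n k : ℕ} (h : k ≤ n) :
    (revolvingDoor (n + 1) (k + 1)).getLast? = some (insert n (range k)) := by
  rw [revolvingDoor, List.getLast?_append, List.getLast?_map, List.getLast?_reverse,
    head?_revolvingDoor h]
  rfl

theorem symmDiff_insert_insert {α : Type*} [DecidableEq α] {a : α} {s t : Finset α}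
    (hs : a ∉ s) (ht : a ∉ t) : symmDiff (insert a s) (insert a t) = symmDiff s t := by
  ext x
  simp only [mem_symmDiff, Finset.mem_insert]
  grind

theorem card_symmDiff_seam :
    ∀ {m k : ℕ}, k ≤ m → ∀ y ∈ (revolvingDoor (m + 1) k).getLast?,
      (symmDiff (insert m (range k)) (insert (m + 1) y)).card = 2
  | m, 0, _, y, hy => by
    obtain rfl : y = ∅ := by simpa [revolvingDoor, eq_comm] using hy
    have : symmDiff (insert m (range 0)) (insert (m + 1) ∅) = {m, m + 1} := by
      ext
      simp only [mem_symmDiff, Finset.mem_insert, mem_range, Finset.mem_singleton,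
        Finset.notMem_empty, Nat.not_lt_zero, or_false]
      omega
    rw [this, card_pair (by omega)]
  | m, j + 1, h, y, hy => by
    rw [getLast?_revolvingDoor_succ (by omega), Option.mem_some_iff] at hy
    subst hy
    have : symmDiff (insert m (range (j + 1))) (insert (m + 1) (insert m (range j))) =
        {j, m + 1} := by
      ext
      simp only [mem_symmDiff, Finset.mem_insert, mem_range, Finset.mem_singleton]
      omega
    rw [this, card_pair (by omega)]

theorem isChain_revolvingDoor :
    ∀ n k, (revolvingDoor n k).IsChain (fun s t => (symmDiff s t).card = 2)
  | _, 0 => by simp [revolvingDoor]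
  | 0, _ + 1 => List.isChain_nil
  | n + 1, k + 1 => by
    rw [revolvingDoor, List.isChain_append]
    refine ⟨isChain_revolvingDoor n (k + 1), ?_, ?_⟩
    · rw [List.isChain_map, List.isChain_reverse]
      refine (isChain_revolvingDoor n k).imp_of_mem_imp fun s t hs ht hst => ?_
      rw [symmDiff_insert_insert (notMem_of_mem_revolvingDoor ht)
        (notMem_of_mem_revolvingDoor hs), symmDiff_comm, hst]
    · intro x hx y hy
      rcases Nat.lt_or_ge n (k + 1) with hlt | hle
      · simp [revolvingDoor_eq_nil hlt] at hx
      obtain ⟨m, rfl⟩ : ∃ m, n = m + 1 := ⟨n - 1, by omega⟩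
      rw [getLast?_revolvingDoor_succ (by omega), Option.mem_some_iff] at hx
      rw [List.head?_map, List.head?_reverse, Option.mem_map] at hy
      obtain ⟨z, hz, rfl⟩ := hy
      exact hx ▸ card_symmDiff_seam (by omega) z hz

theorem revolving_door_gray_code (N k : ℕ) :
    ∃ r : Fin (N.choose k) → {s : Finset (Fin N) // s.card = k},
      Function.Bijective r ∧
      ∀ i : Fin (N.choose k - 1),
        (symmDiff (r ⟨i.val, by omega⟩).val (r ⟨i.val + 1, by omega⟩).val).card = 2 := by
  set l := revolvingDoor N k
  have hl : l.length = N.choose k := length_revolvingDoor N k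
  have hmem (i : Fin (N.choose k)) : l[i] ∈ powersetCard k (range N) :=
    mem_revolvingDoor.mp (List.getElem_mem _)
  have hlt (i : Fin (N.choose k)) : ∀ m ∈ l[i], m < N := fun m hm =>
    mem_range.mp ((mem_powersetCard.mp (hmem i)).1 hm)
  let r (i : Fin (N.choose k)) : {s : Finset (Fin N) // s.card = k} :=
    ⟨l[i].attachFin (hlt i), by rw [card_attachFin]; exact (mem_powersetCard.mp (hmem i)).2⟩
  have hr (i : Fin (N.choose k)) : (r i).val.image Fin.val = l[i] := image_val_attachFin _
  refine ⟨r, (Fintype.bijective_iff_surjective_and_card r).mpr ⟨fun t => ?_, by simp⟩,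
    fun i => ?_⟩
  · have ht : t.val.image Fin.val ∈ l := mem_revolvingDoor.mpr <| mem_powersetCard.mpr
      ⟨image_fin_univ ▸ image_subset_image (subset_univ _),
        by rw [card_image_of_injective _ Fin.val_injective, t.2]⟩
    obtain ⟨i, hi, hit⟩ := List.getElem_of_mem ht
    refine ⟨⟨i, hl ▸ hi⟩, Subtype.ext ?_⟩
    exact image_injective Fin.val_injective ((hr _).trans hit)
  · rw [← card_image_of_injective _ Fin.val_injective, image_symmDiff _ _ Fin.val_injective,
      hr, hr]
    exact List.isChain_iff_getElem.mp (isChain_revolvingDoor N k) i (by rw [hl]; omega)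
end

section
/- Gray-code order on binary vectors of length n is the pullback of the natural order on integers under Gray decoding: for vectors a and b representing numbers whose reflected Gray decodings are x and y respectively, a <_G b if and only if x < y. Equivalently, the map k ↦ bits of (k XOR k/2) from Fin(2^n) with its natural order to binary vectors with Gray-code order is an order isomorphism. -/
/-- Bits (most significant first) of the Gray code of `k`. -/
def grayBits (n : ℕ) (k : Fin (2 ^ n)) : Fin n → Bool :=
  fun i => Nat.testBit (Nat.xor k.val (k.val / 2)) (n - 1 - i.val)

/-! Bit `q` of the Gray code of `k` is `k_q xor k_(q+1)`, so the parity of the Gray bits in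
positions `p, p+1, …` telescopes to `k_p`. Hence the Gray codes of `x` and `y` agree above a
position `p` iff `x` and `y` do, and at the first position `p` where they differ, the parity rule
of `<_G` says exactly that `x_p = 0` and `y_p = 1`, i.e. that `x < y`. -/

open Finset

theorem Nat.lt_iff_exists_testBit {a b : ℕ} :
    a < b ↔ ∃ p, (∀ q, p < q → a.testBit q = b.testBit q) ∧
      a.testBit p = false ∧ b.testBit p = true := by
  refine ⟨fun hab => ?_, fun ⟨p, hhigh, ha, hb⟩ => Nat.lt_of_testBit p ha hb hhigh⟩
  obtain ⟨p, hp, hhigh⟩ :=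
    Nat.exists_most_significant_bit (mt Nat.xor_eq_zero_iff.mp hab.ne)
  have hagree : ∀ q, p < q → a.testBit q = b.testBit q := fun q hq => by
    simpa [Nat.testBit_xor] using hhigh q hq
  refine ⟨p, hagree, ?_⟩
  rw [Nat.testBit_xor] at hp
  cases ha : a.testBit p <;> cases hb : b.testBit p <;> simp [ha, hb] at hp ⊢
  exact hab.not_gt (Nat.lt_of_testBit p hb ha fun q hq => (hagree q hq).symm)

theorem decide_card_filter_xor_mod_two (f : ℕ → Bool) {p n : ℕ} (hpn : p ≤ n) :
    decide (#{q ∈ Ico p n | (f q ^^ f (q + 1)) = true} % 2 = 1) = (f p ^^ f n) := by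
  induction n, hpn using Nat.le_induction with
  | base => simp
  | succ n hpn ih =>
    have hsplit : (f p ^^ f (n + 1)) = ((f p ^^ f n) ^^ (f n ^^ f (n + 1))) := by
      cases f n <;> simp
    rw [hsplit, ← ih, Nat.Ico_succ_right_eq_insert_Ico hpn, filter_insert]
    split_ifs with hstep
    · rw [card_insert_of_notMem (by simp), hstep, Bool.xor_true]
      simp only [Nat.succ_mod_two_eq_one_iff, ← Nat.mod_two_ne_one, decide_not]
    · rw [eq_false_of_ne_true hstep, Bool.xor_false]

theorem card_filter_fin_lt_eq_card_Ico {n : ℕ} (P : ℕ → Prop) [DecidablePred P] (j : Fin n) :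
    #{i : Fin n | i < j ∧ P (n - 1 - i)} = #{q ∈ Ico (n - j) n | P q} := by
  have hj := j.isLt
  refine card_nbij' (fun i => n - 1 - i) (fun q => ⟨n - 1 - q, by omega⟩) ?_ ?_ ?_ ?_
  · intro i hi
    simp only [coe_filter, mem_univ, true_and, Set.mem_ofPred_eq, Fin.lt_def, mem_Ico] at hi ⊢
    exact ⟨by omega, hi.2⟩
  · intro q hq
    simp only [coe_filter, mem_univ, true_and, Set.mem_ofPred_eq, Fin.lt_def, mem_Ico] at hq ⊢
    exact ⟨by omega, by rw [show n - 1 - (n - 1 - q) = q by omega]; exact hq.2⟩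
  · intro i _
    ext
    simp only
    omega
  · intro q hq
    simp only [coe_filter, Set.mem_ofPred_eq, mem_Ico] at hq
    simp only
    omega

def grayCode (k : ℕ) : ℕ := k ^^^ k / 2

theorem testBit_grayCode (k q : ℕ) :
    (grayCode k).testBit q = (k.testBit q ^^ k.testBit (q + 1)) := by
  rw [grayCode, Nat.testBit_xor, Nat.testBit_div_two]

theorem grayCode_lt_two_pow {k n : ℕ} (hk : k < 2 ^ n) : grayCode k < 2 ^ n :=
  Nat.xor_lt_two_pow hk ((Nat.div_le_self k 2).trans_lt hk)

theorem testBit_eq_decide_card_grayCode {k n p : ℕ} (hk : k < 2 ^ n) (hpn : p ≤ n) :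
    k.testBit p = decide (#{q ∈ Ico p n | (grayCode k).testBit q = true} % 2 = 1) := by
  simp only [testBit_grayCode, decide_card_filter_xor_mod_two _ hpn,
    Nat.testBit_lt_two_pow hk, Bool.xor_false]

theorem grayCode_testBit_agree_iff {x y p : ℕ} :
    (∀ q, p < q → (grayCode x).testBit q = (grayCode y).testBit q) ↔
      ∀ q, p < q → x.testBit q = y.testBit q := by
  refine ⟨fun h q hq => ?_, fun h q hq => by
    rw [testBit_grayCode, testBit_grayCode, h q hq, h (q + 1) (by omega)]⟩
  have hN : ∀ k, k ≤ x + y + q → k < 2 ^ (x + y + q) := fun k hk =>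
    Nat.lt_two_pow_self.trans_le (Nat.pow_le_pow_right two_pos hk)
  rw [testBit_eq_decide_card_grayCode (hN x (by omega)) (by omega),
    testBit_eq_decide_card_grayCode (hN y (by omega)) (by omega),
    filter_congr fun r hr => by rw [h r (by simp only [mem_Ico] at hr; omega)]]

theorem grayCode_first_diff_iff {x y p : ℕ} :
    ((∀ q, p < q → (grayCode x).testBit q = (grayCode y).testBit q) ∧
      (grayCode x).testBit p ≠ (grayCode y).testBit p ∧
      (grayCode x).testBit p = x.testBit (p + 1)) ↔
    (∀ q, p < q → x.testBit q = y.testBit q) ∧ x.testBit p = false ∧ y.testBit p = true := by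
  rw [grayCode_testBit_agree_iff]
  refine and_congr_right fun h => ?_
  rw [testBit_grayCode, testBit_grayCode, h (p + 1) (by omega)]
  cases x.testBit p <;> cases y.testBit p <;> cases y.testBit (p + 1) <;> simp

theorem grayBits_apply (n : ℕ) (k : Fin (2 ^ n)) (i : Fin n) :
    grayBits n k i = (grayCode k).testBit (n - 1 - i) := rfl

theorem decide_card_grayBits {n : ℕ} (k : Fin (2 ^ n)) (j : Fin n) :
    decide (#{i | i < j ∧ grayBits n k i = true} % 2 = 1) = k.val.testBit (n - j) := by
  rw [testBit_eq_decide_card_grayCode k.isLt (Nat.sub_le n j), ← card_filter_fin_lt_eq_card_Ico]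
  rfl

theorem forall_lt_grayBits_eq_iff {n : ℕ} (x y : Fin (2 ^ n)) (j : Fin n) :
    (∀ i < j, grayBits n x i = grayBits n y i) ↔
      ∀ q, n - 1 - j < q → (grayCode x).testBit q = (grayCode y).testBit q := by
  refine ⟨fun h q hq => ?_, fun h i hi => h _ (by rw [Fin.lt_def] at hi; omega)⟩
  rcases lt_or_ge q n with hqn | hqn
  · simpa [grayBits_apply, show n - 1 - (n - 1 - q) = q by omega] using
      h ⟨n - 1 - q, by omega⟩ (by rw [Fin.lt_def]; simp only; omega)
  · have hle := Nat.pow_le_pow_right two_pos hqn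
    rw [Nat.testBit_lt_two_pow ((grayCode_lt_two_pow x.isLt).trans_le hle),
      Nat.testBit_lt_two_pow ((grayCode_lt_two_pow y.isLt).trans_le hle)]

theorem grayLT_grayBits_iff {n : ℕ} (x y : Fin (2 ^ n)) :
    grayLT n (grayBits n x) (grayBits n y) ↔
      ∃ p < n, (∀ q, p < q → (grayCode x).testBit q = (grayCode y).testBit q) ∧
        (grayCode x).testBit p ≠ (grayCode y).testBit p ∧
        (grayCode x).testBit p = x.val.testBit (p + 1) := by
  simp only [grayLT, forall_lt_grayBits_eq_iff, decide_card_grayBits]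
  simp only [grayBits_apply]
  constructor
  · rintro ⟨j, h⟩
    exact ⟨n - 1 - j, by omega, by rwa [show n - 1 - j + 1 = n - j by omega]⟩
  · rintro ⟨p, hp, h⟩
    refine ⟨⟨n - 1 - p, by omega⟩, ?_⟩
    simpa only [show n - 1 - (n - 1 - p) = p by omega, show n - (n - 1 - p) = p + 1 by omega]
      using h

theorem grayLT_pullback_of_lt (n : ℕ) (x y : Fin (2 ^ n)) :
    grayLT n (grayBits n x) (grayBits n y) ↔ x < y := by
  rw [grayLT_grayBits_iff, Fin.lt_def, Nat.lt_iff_exists_testBit]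
  simp only [grayCode_first_diff_iff]
  refine ⟨fun ⟨p, _, h⟩ => ⟨p, h⟩, fun ⟨p, h⟩ => ⟨p, ?_, h⟩⟩
  by_contra! hnp
  have := Nat.testBit_lt_two_pow (y.isLt.trans_le (Nat.pow_le_pow_right two_pos hnp))
  simp [this] at h
end
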